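/- arXiv:1211.2367 — 2 statements merged into one kernel-verified Lean document; each statement's English description precedes it below -/
import Mathlib

section
/- Let (L₁, …, L_h; w₁, …, w_h) be a vertex hierarchy of height h on the weighted graph G = (V, w₁). Then for every 1 ≤ i ≤ h and all distinct u, v ∈ V_i with w_i u v < ⊤, there exists a walk from u to v in w₁ whose length equals w_i u v; consequently w_i u v ≥ dist_G(u,v). -/
namespace ISLabel

variable {V : Type*}

/-- Two vertices are adjacent in the weighted graph `w` when they are distinct and
joined by an edge of finite weight. -/
def Adj (w : V → V → ℕ∞) (u v : V) : Prop := u ≠ v ∧ w u v < ⊤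

/-- `p` is a walk from `u` to `v` in the weighted graph `w`: a nonempty list of
vertices starting at `u`, ending at `v`, with consecutive vertices adjacent. -/
def IsWalk (w : V → V → ℕ∞) (u v : V) (p : List V) : Prop :=
  p ≠ [] ∧ p.head? = some u ∧ p.getLast? = some v ∧ p.Chain' (Adj w)

/-- The length of a list of vertices: the sum of `f` over consecutive pairs. -/
def pathLen (f : V → V → ℕ∞) (p : List V) : ℕ∞ :=
  ((p.zip p.tail).map fun e => f e.1 e.2).sum

/-- The distance from `u` to `v` in `w`: the infimum of the lengths of all walks
from `u` to `v` (`⊤` if there is no such walk). -/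
noncomputable def wdist (w : V → V → ℕ∞) (u v : V) : ℕ∞ :=
  ⨅ p : {p : List V // IsWalk w u v p}, pathLen w p.1

/-- `I` is an independent set in `w`. -/
def IsIndep (w : V → V → ℕ∞) (I : Set V) : Prop :=
  ∀ u ∈ I, ∀ v ∈ I, ¬ Adj w u v

/-- `w` is a weighted undirected graph: symmetric, and every off-diagonal value is
either `⊤` (no edge) or a weight `≥ 1`. -/
def IsWGraph (w : V → V → ℕ∞) : Prop :=
  (∀ u v, w u v = w v u) ∧ ∀ u v, u ≠ v → 1 ≤ w u v

/-- `w` is supported on `S`: all weights touching a vertex outside `S` are `⊤`. -/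
def SupportedOn (w : V → V → ℕ∞) (S : Set V) : Prop :=
  ∀ u v, u ∉ S ∨ v ∉ S → w u v = ⊤

/-- `VsetOf L i` is the vertex set `V_i = V ∖ (L₁ ∪ … ∪ L_{i-1})`. -/
def VsetOf (L : ℕ → Set V) (i : ℕ) : Set V := {v | ∀ j, 1 ≤ j → j < i → v ∉ L j}

/-- A vertex hierarchy of height `h ≥ 1` on the weighted graph `w 1`:
pairwise disjoint independent levels `L 1, …, L h` covering `V`, and graphs
`w i` supported on `V_i` obtained by the augmenting-edge construction. -/
structure VertexHierarchy (V : Type*) (h : ℕ) where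
  L : ℕ → Set V
  w : ℕ → V → V → ℕ∞
  h_pos : 1 ≤ h
  wgraph : ∀ i, 1 ≤ i → i ≤ h → IsWGraph (w i)
  disj : ∀ i j, 1 ≤ i → i ≤ h → 1 ≤ j → j ≤ h → i ≠ j → ∀ v, v ∈ L i → v ∉ L j
  cover : ∀ v : V, ∃ i, 1 ≤ i ∧ i ≤ h ∧ v ∈ L i
  supported : ∀ i, 1 ≤ i → i ≤ h → SupportedOn (w i) (VsetOf L i)
  aug : ∀ i, 2 ≤ i → i ≤ h → ∀ u v : V, u ≠ v → u ∈ VsetOf L i → v ∈ VsetOf L i →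
    w i u v = min (w (i - 1) u v) (⨅ x ∈ L (i - 1), w (i - 1) u x + w (i - 1) x v)
  indep : ∀ i, 1 ≤ i → i ≤ h → IsIndep (w i) (L i)

/-- The level `ℓ(v)`: the unique `i` with `1 ≤ i ≤ h` and `v ∈ L i`. -/
noncomputable def level {h : ℕ} (H : VertexHierarchy V h) (v : V) : ℕ :=
  sInf {i | 1 ≤ i ∧ i ≤ h ∧ v ∈ H.L i}

/-! By induction on `i`, every finite edge `u v` of `G_i` is realized by a walk of `G` of the same
length. An edge of `G_{i+1}` either is an edge of `G_i`, or its weight is `w_i u x + w_i x v` for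
some `x ∈ L_i` attaining the infimum (which exists since `ℕ∞` is well ordered); as `u, v ∉ L_i`,
both `u x` and `x v` are edges of `G_i`, and concatenating their walks realizes `u v`. -/

lemma _root_.ENat.exists_mem_eq_biInf_of_lt_top {ι : Type*} {S : Set ι} {f : ι → ℕ∞}
    (h : ⨅ x ∈ S, f x < ⊤) : ∃ x ∈ S, f x = ⨅ x ∈ S, f x := by
  obtain rfl | hS := S.eq_empty_or_nonempty
  · simp at h
  have := hS.to_subtype
  rw [iInf_subtype'] at h ⊢
  obtain ⟨⟨x, hx⟩, hfx⟩ := ENat.exists_eq_iInf fun x : S => f x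
  exact ⟨x, hx, hfx⟩

@[simp]
lemma pathLen_cons_cons (f : V → V → ℕ∞) (a b : V) (t : List V) :
    pathLen f (a :: b :: t) = f a b + pathLen f (b :: t) := by
  simp [pathLen]

lemma pathLen_append_tail (f : V → V → ℕ∞) :
    ∀ {p q : List V}, p.getLast? = q.head? → pathLen f (p ++ q.tail) = pathLen f p + pathLen f q
  | [], [], _ => by simp [pathLen]
  | [_], _ :: _, h => by
    obtain rfl : _ = _ := by simpa using h
    simp [pathLen]
  | a :: b :: t, q, h => by
    rw [List.getLast?_cons_cons] at h
    simp only [List.cons_append, pathLen_cons_cons]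
    rw [← List.cons_append, pathLen_append_tail f h, add_assoc]

lemma isWalk_pair {w : V → V → ℕ∞} {u v : V} (huv : Adj w u v) : IsWalk w u v [u, v] :=
  ⟨by simp, rfl, rfl, List.isChain_pair.mpr huv⟩

lemma IsWalk.append_tail {w : V → V → ℕ∞} {u x v : V} {p q : List V}
    (hp : IsWalk w u x p) (hq : IsWalk w x v q) : IsWalk w u v (p ++ q.tail) := by
  obtain ⟨hp0, hpu, hpx, hpc⟩ := hp
  obtain ⟨hq0, hqx, hqv, hqc⟩ := hq
  obtain ⟨q, rfl⟩ : ∃ q', q = x :: q' := by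
    cases q with
    | nil => exact absurd rfl hq0
    | cons y q' => exact ⟨q', by simpa using hqx⟩
  obtain ⟨p, rfl⟩ : ∃ p', p = p' ++ [x] := by
    obtain ⟨p', y, rfl⟩ := (List.eq_nil_or_concat' _).resolve_left hp0
    exact ⟨p', by simpa using hpx⟩
  refine ⟨by simp, ?_, ?_, ?_⟩
  · simpa using hpu
  · cases q with
    | nil => simpa using hqv
    | cons y q => simpa using hqv
  · change List.IsChain _ _
    simpa only [List.tail_cons, List.append_assoc, List.singleton_append] using
      List.isChain_split.mpr ⟨hpc, hqc⟩

lemma wdist_le_pathLen {w : V → V → ℕ∞} {u v : V} {p : List V} (hp : IsWalk w u v p) :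
    wdist w u v ≤ pathLen w p :=
  iInf_le (fun q : {p : List V // IsWalk w u v p} => pathLen w q.1) ⟨p, hp⟩

def EdgesRealizedIn (w w₁ : V → V → ℕ∞) : Prop :=
  ∀ u v, u ≠ v → w u v < ⊤ → ∃ p, IsWalk w₁ u v p ∧ pathLen w₁ p = w u v

lemma edgesRealizedIn_self (w : V → V → ℕ∞) : EdgesRealizedIn w w :=
  fun u v huv hlt => ⟨[u, v], isWalk_pair ⟨huv, hlt⟩, by simp [pathLen]⟩

lemma EdgesRealizedIn.augment {w₁ w w' : V → V → ℕ∞} {S L : Set V}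
    (hw : EdgesRealizedIn w w₁) (hS : SupportedOn w' S) (hSL : ∀ v ∈ S, v ∉ L)
    (haug : ∀ u v, u ≠ v → u ∈ S → v ∈ S →
      w' u v = min (w u v) (⨅ x ∈ L, w u x + w x v)) :
    EdgesRealizedIn w' w₁ := by
  intro u v huv hlt
  have hu : u ∈ S := by_contra fun hu => hlt.ne (hS u v (.inl hu))
  have hv : v ∈ S := by_contra fun hv => hlt.ne (hS u v (.inr hv))
  rw [haug u v huv hu hv] at hlt ⊢
  rcases min_choice (w u v) (⨅ x ∈ L, w u x + w x v) with hmin | hmin <;> rw [hmin] at hlt ⊢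
  · exact hw u v huv hlt
  obtain ⟨x, hxL, hx⟩ := ENat.exists_mem_eq_biInf_of_lt_top hlt
  rw [← hx] at hlt ⊢
  obtain ⟨p, hp, hpx⟩ := hw u x (fun h => hSL u hu (h ▸ hxL)) (ENat.add_lt_top.mp hlt).1
  obtain ⟨q, hq, hqx⟩ := hw x v (fun h => hSL v hv (h ▸ hxL)) (ENat.add_lt_top.mp hlt).2
  refine ⟨p ++ q.tail, hp.append_tail hq, ?_⟩
  rw [pathLen_append_tail _ (hp.2.2.1.trans hq.2.1.symm), hpx, hqx]

lemma VertexHierarchy.edgesRealizedIn {h : ℕ} (H : VertexHierarchy V h) :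
    ∀ i, 1 ≤ i → i ≤ h → EdgesRealizedIn (H.w i) (H.w 1) := by
  intro i hi
  induction i, hi using Nat.le_induction with
  | base => exact fun _ => edgesRealizedIn_self _
  | succ i hi ih =>
    intro hih
    refine (ih (by omega)).augment (H.supported (i + 1) (by omega) hih)
      (fun v hv => hv i hi i.lt_succ_self) ?_
    simpa using H.aug (i + 1) (by omega) hih

theorem hierarchy_edge_realized_general {h : ℕ} (H : VertexHierarchy V h) :
    ∀ i, 1 ≤ i → i ≤ h → ∀ u v : V, u ≠ v →
      u ∈ VsetOf H.L i → v ∈ VsetOf H.L i → H.w i u v < ⊤ →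
      (∃ p : List V, IsWalk (H.w 1) u v p ∧ pathLen (H.w 1) p = H.w i u v) ∧
      wdist (H.w 1) u v ≤ H.w i u v := by
  intro i hi hih u v huv _ _ hlt
  obtain ⟨p, hp, hlen⟩ := H.edgesRealizedIn i hi hih u v huv hlt
  exact ⟨⟨p, hp, hlen⟩, hlen ▸ wdist_le_pathLen hp⟩

/-- every (possibly augmenting) edge of `G_i` comes from a walk in
the original graph of the same length; hence its weight dominates the distance. -/
theorem hierarchy_edge_realized [Fintype V] {h : ℕ} (H : VertexHierarchy V h) :
    ∀ i, 1 ≤ i → i ≤ h → ∀ u v : V, u ≠ v →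
      u ∈ VsetOf H.L i → v ∈ VsetOf H.L i → H.w i u v < ⊤ →
      (∃ p : List V, IsWalk (H.w 1) u v p ∧ pathLen (H.w 1) p = H.w i u v) ∧
      wdist (H.w 1) u v ≤ H.w i u v :=
  hierarchy_edge_realized_general H

end ISLabel
end

section
/- Let (L₁, …, L_{k−1}, V_{G_k}; w₁, …, w_k) be a k-level vertex hierarchy on the weighted graph G = (V, w₁). Suppose V_{G_k} ≠ ∅ and G is connected, i.e. dist_G(u,v) < ⊤ for all u, v ∈ V. Then every vertex v ∈ V has an ancestor in V_{G_k}, i.e. Anc(v) ∩ V_{G_k} ≠ ∅. -/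
namespace ISLabel

variable {V : Type*}

/-- A `k`-level vertex hierarchy (`k ≥ 2`) on the weighted graph `w 1`: like a
vertex hierarchy of height `k`, except that the top vertex set
`V_{G_k} = VsetOf L k` is not required to be independent in `w k`. -/
structure KLevelHierarchy (V : Type*) (k : ℕ) where
  L : ℕ → Set V
  w : ℕ → V → V → ℕ∞
  two_le : 2 ≤ k
  wgraph : ∀ i, 1 ≤ i → i ≤ k → IsWGraph (w i)
  disj : ∀ i j, 1 ≤ i → i < k → 1 ≤ j → j < k → i ≠ j → ∀ v, v ∈ L i → v ∉ L j
  supported : ∀ i, 1 ≤ i → i ≤ k → SupportedOn (w i) (VsetOf L i)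
  aug : ∀ i, 2 ≤ i → i ≤ k → ∀ u v : V, u ≠ v → u ∈ VsetOf L i → v ∈ VsetOf L i →
    w i u v = min (w (i - 1) u v) (⨅ x ∈ L (i - 1), w (i - 1) u x + w (i - 1) x v)
  indep : ∀ i, 1 ≤ i → i < k → IsIndep (w i) (L i)

/-- The level of a vertex: the unique `i < k` with `v ∈ L i`, and `k` for vertices
of the top vertex set `V_{G_k}`. -/
noncomputable def klevel {k : ℕ} (H : KLevelHierarchy V k) (v : V) : ℕ :=
  sInf {i | (1 ≤ i ∧ i < k ∧ v ∈ H.L i) ∨ i = k}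

/-- One step of an ascending sequence in a `k`-level vertex hierarchy. -/
def kAscStep {k : ℕ} (H : KLevelHierarchy V k) (a b : V) : Prop :=
  klevel H a < klevel H b ∧ Adj (H.w (klevel H a)) a b

/-- `p` is an ascending sequence from `v` to `u`. -/
def kIsAscending {k : ℕ} (H : KLevelHierarchy V k) (v u : V) (p : List V) : Prop :=
  p ≠ [] ∧ p.head? = some v ∧ p.getLast? = some u ∧ p.Chain' (kAscStep H)

/-- The set of ancestors of `v`. -/
def kAnc {k : ℕ} (H : KLevelHierarchy V k) (v : V) : Set V :=
  {u | ∃ p, kIsAscending H v u p}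

/-- `d(v,u)` in a `k`-level vertex hierarchy. -/
noncomputable def kAncDist {k : ℕ} (H : KLevelHierarchy V k) (v u : V) : ℕ∞ :=
  ⨅ p : {p : List V // kIsAscending H v u p},
    pathLen (fun a b => H.w (klevel H a) a b) p.1

/-!
Connectivity of `G = G₁` passes to every `Gᵢ`: as `Lᵢ` is independent in `Gᵢ`, a path of `Gᵢ`
leaves `V_{i+1}` only at isolated vertices `x ∈ Lᵢ`, and each detour `u – x – v` is replaced by
the augmenting edge `uv` of `G_{i+1}`. So a vertex `v ∈ Lᵢ` with `i < k` has a neighbour in `Gᵢ`,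
whose vertex set contains the nonempty top set; by independence of `Lᵢ` that neighbour lies at a
higher level, and climbing in this way reaches the top set.
-/

section Shortcut

variable {α : Type*} {R R' : α → α → Prop} {S : Set α}

theorem _root_.Relation.ReflTransGen.of_shortcut
    (hindep : ∀ a b, a ∉ S → b ∉ S → ¬ R a b)
    (hkeep : ∀ a b, a ∈ S → b ∈ S → R a b → R' a b)
    (hshort : ∀ a x b, a ∈ S → x ∉ S → b ∈ S → a ≠ b → R a x → R x b → R' a b)
    {a b : α} (ha : a ∈ S) (hb : b ∈ S) (h : Relation.ReflTransGen R a b) :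
    Relation.ReflTransGen R' a b := by
  suffices key : (a ∈ S → Relation.ReflTransGen R' a b) ∧
      (a ∉ S → ∀ c ∈ S, R c a → Relation.ReflTransGen R' c b) from key.1 ha
  clear ha
  induction h using Relation.ReflTransGen.head_induction_on with
  | refl => exact ⟨fun _ => .refl, fun hbS => absurd hb hbS⟩
  | @head a x hax _ ih =>
    refine ⟨fun haS => ?_, fun haS c hc hca => ?_⟩
    · by_cases hxS : x ∈ S
      · exact .head (hkeep a x haS hxS hax) (ih.1 hxS)
      · exact ih.2 hxS a haS hax
    · have hxS : x ∈ S := by_contra fun hxS => hindep a x haS hxS hax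
      by_cases hcx : c = x
      · exact hcx ▸ ih.1 hxS
      · exact .head (hshort c a x hc haS hxS hcx hca hax) (ih.1 hxS)

end Shortcut

lemma reflTransGen_of_isWalk {w : V → V → ℕ∞} {u v : V} {p : List V} (hp : IsWalk w u v p) :
    Relation.ReflTransGen (Adj w) u v := by
  obtain ⟨hne, hhead, hlast, hchain⟩ := hp
  have := List.relationReflTransGen_of_exists_isChain p hchain hne
  rwa [(List.head_eq_iff_head?_eq_some hne).mpr hhead, List.getLast_of_mem_getLast? hlast] at this

lemma reflTransGen_of_wdist_lt_top {w : V → V → ℕ∞} {u v : V} (h : wdist w u v < ⊤) :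
    Relation.ReflTransGen (Adj w) u v := by
  obtain ⟨p⟩ : Nonempty {p : List V // IsWalk w u v p} := by
    by_contra hempty
    rw [not_nonempty_iff] at hempty
    simp [wdist, iInf_of_empty] at h
  exact reflTransGen_of_isWalk p.2

lemma SupportedOn.mem_of_adj {w : V → V → ℕ∞} {S : Set V} (hw : SupportedOn w S) {u v : V}
    (h : Adj w u v) : u ∈ S ∧ v ∈ S := by
  by_contra hc
  exact h.2.ne (hw u v (not_and_or.mp hc))

lemma vsetOf_antitone (L : ℕ → Set V) : Antitone (VsetOf L) :=
  fun _ _ hij _ hv j hj1 hj2 => hv j hj1 (hj2.trans_le hij)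

lemma mem_vsetOf_succ {L : ℕ → Set V} {i : ℕ} (hi : 1 ≤ i) {v : V} :
    v ∈ VsetOf L (i + 1) ↔ v ∈ VsetOf L i ∧ v ∉ L i := by
  refine ⟨fun h => ⟨vsetOf_antitone L i.le_succ h, h i hi i.lt_succ_self⟩, ?_⟩
  rintro ⟨hv, hvi⟩ j hj1 hj2
  rcases Nat.lt_succ_iff_lt_or_eq.mp hj2 with hj | rfl
  exacts [hv j hj1 hj, hvi]

namespace KLevelHierarchy

variable {k : ℕ} (H : KLevelHierarchy V k)

lemma adj_succ_of_adj {i : ℕ} (hi : 1 ≤ i) (hik : i < k) {u v : V}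
    (hu : u ∈ VsetOf H.L (i + 1)) (hv : v ∈ VsetOf H.L (i + 1)) (h : Adj (H.w i) u v) :
    Adj (H.w (i + 1)) u v := by
  refine ⟨h.1, ?_⟩
  rw [H.aug (i + 1) (by omega) hik u v h.1 hu hv, Nat.add_sub_cancel]
  exact (min_le_left _ _).trans_lt h.2

lemma adj_succ_of_adj_of_adj {i : ℕ} (hi : 1 ≤ i) (hik : i < k) {u x v : V}
    (hu : u ∈ VsetOf H.L (i + 1)) (hv : v ∈ VsetOf H.L (i + 1)) (hx : x ∈ H.L i) (huv : u ≠ v)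
    (hux : Adj (H.w i) u x) (hxv : Adj (H.w i) x v) :
    Adj (H.w (i + 1)) u v := by
  refine ⟨huv, ?_⟩
  rw [H.aug (i + 1) (by omega) hik u v huv hu hv, Nat.add_sub_cancel]
  calc min (H.w i u v) (⨅ y ∈ H.L i, H.w i u y + H.w i y v)
      ≤ H.w i u x + H.w i x v := (min_le_right _ _).trans (iInf₂_le x hx)
    _ < ⊤ := WithTop.add_lt_top.mpr ⟨hux.2, hxv.2⟩

lemma reflTransGen_succ {i : ℕ} (hi : 1 ≤ i) (hik : i < k) {u v : V}
    (hu : u ∈ VsetOf H.L (i + 1)) (hv : v ∈ VsetOf H.L (i + 1))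
    (h : Relation.ReflTransGen (Adj (H.w i)) u v) :
    Relation.ReflTransGen (Adj (H.w (i + 1))) u v := by
  refine h.of_shortcut (fun a b ha hb hab => ?_) (fun a b => H.adj_succ_of_adj hi hik)
    (fun a x b ha hx hb hab hax hxb => ?_) hu hv
  · have ⟨ha', hb'⟩ := (H.supported i hi hik.le).mem_of_adj hab
    have haL : a ∈ H.L i := by_contra fun h => ha ((mem_vsetOf_succ hi).mpr ⟨ha', h⟩)
    have hbL : b ∈ H.L i := by_contra fun h => hb ((mem_vsetOf_succ hi).mpr ⟨hb', h⟩)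
    exact H.indep i hi hik a haL b hbL hab
  · have hx' := ((H.supported i hi hik.le).mem_of_adj hax).2
    have hxL : x ∈ H.L i := by_contra fun h => hx ((mem_vsetOf_succ hi).mpr ⟨hx', h⟩)
    exact H.adj_succ_of_adj_of_adj hi hik ha hb hxL hab hax hxb

lemma reflTransGen_of_mem_vsetOf (hconn : ∀ u v : V, wdist (H.w 1) u v < ⊤) {i : ℕ}
    (hi : 1 ≤ i) (hik : i ≤ k) {u v : V} (hu : u ∈ VsetOf H.L i) (hv : v ∈ VsetOf H.L i) :
    Relation.ReflTransGen (Adj (H.w i)) u v := by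
  induction i, hi using Nat.le_induction generalizing u v with
  | base => exact reflTransGen_of_wdist_lt_top (hconn u v)
  | succ i hi ih =>
    exact H.reflTransGen_succ hi hik hu hv <| ih (by omega)
      (vsetOf_antitone H.L i.le_succ hu) (vsetOf_antitone H.L i.le_succ hv)

lemma klevel_spec (v : V) :
    (1 ≤ klevel H v ∧ klevel H v < k ∧ v ∈ H.L (klevel H v)) ∨ klevel H v = k :=
  Nat.sInf_mem (s := {i | (1 ≤ i ∧ i < k ∧ v ∈ H.L i) ∨ i = k}) ⟨k, Or.inr rfl⟩

lemma klevel_le (v : V) : klevel H v ≤ k :=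
  Nat.sInf_le (Or.inr rfl)

lemma klevel_eq_of_mem {v : V} {i : ℕ} (hi : 1 ≤ i) (hik : i < k) (hv : v ∈ H.L i) :
    klevel H v = i := by
  refine le_antisymm (Nat.sInf_le (Or.inl ⟨hi, hik, hv⟩)) (le_csInf ⟨k, Or.inr rfl⟩ ?_)
  rintro j (⟨hj, hjk, hvj⟩ | rfl)
  · by_contra! hji
    exact H.disj i j hi hik hj hjk hji.ne' v hv hvj
  · exact hik.le

lemma mem_vsetOf_klevel (v : V) : v ∈ VsetOf H.L (klevel H v) := fun _ hj hjv hv =>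
  hjv.ne' (H.klevel_eq_of_mem hj (hjv.trans_le (H.klevel_le v)) hv)

lemma le_klevel_of_mem_vsetOf {v : V} {i : ℕ} (hik : i ≤ k) (hv : v ∈ VsetOf H.L i) :
    i ≤ klevel H v := by
  rcases H.klevel_spec v with ⟨h1, hk, hL⟩ | hk
  · exact not_lt.mp fun hlt => hv _ h1 hlt hL
  · exact hk.symm ▸ hik

lemma exists_kAscStep (hne : (VsetOf H.L k).Nonempty)
    (hconn : ∀ u v : V, wdist (H.w 1) u v < ⊤) {v : V} (hv : klevel H v < k) :
    ∃ u, kAscStep H v u := by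
  obtain ⟨hi, -, hvL⟩ := (H.klevel_spec v).resolve_right hv.ne
  set i := klevel H v
  obtain ⟨t, ht⟩ := hne
  have htV : t ∈ VsetOf H.L i := vsetOf_antitone H.L hv.le ht
  have hvt : v ≠ t := fun hvt => ht i hi hv (hvt ▸ hvL)
  obtain ⟨u, hvu, -⟩ := ((H.reflTransGen_of_mem_vsetOf hconn hi hv.le (H.mem_vsetOf_klevel v)
    htV).cases_head).resolve_left hvt
  have huV : u ∈ VsetOf H.L (i + 1) :=
    (mem_vsetOf_succ hi).mpr ⟨((H.supported i hi hv.le).mem_of_adj hvu).2,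
      fun huL => H.indep i hi hv v hvL u huL hvu⟩
  exact ⟨u, H.le_klevel_of_mem_vsetOf hv huV, hvu⟩

lemma self_mem_kAnc (v : V) : v ∈ kAnc H v :=
  ⟨[v], by simp, rfl, rfl, List.isChain_singleton v⟩

lemma mem_kAnc_of_kAscStep {v u t : V} (hvu : kAscStep H v u) (ht : t ∈ kAnc H u) :
    t ∈ kAnc H v := by
  obtain ⟨p, hne, hhead, hlast, hchain⟩ := ht
  obtain ⟨p, rfl⟩ : ∃ p', p = u :: p' := by
    cases p with
    | nil => exact absurd rfl hne
    | cons a p' => exact ⟨p', by simpa using hhead⟩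
  exact ⟨v :: u :: p, by simp, rfl, by rwa [List.getLast?_cons_cons],
    List.isChain_cons_cons.mpr ⟨hvu, hchain⟩⟩

end KLevelHierarchy

theorem exists_top_ancestor_general {k : ℕ} (H : KLevelHierarchy V k)
    (hne : (VsetOf H.L k).Nonempty)
    (hconn : ∀ u v : V, wdist (H.w 1) u v < ⊤) :
    ∀ v : V, (kAnc H v ∩ VsetOf H.L k).Nonempty := by
  intro v
  induction hn : k - klevel H v using Nat.strong_induction_on generalizing v with
  | _ n ih =>
    rcases (H.klevel_le v).lt_or_eq with hv | hv
    · obtain ⟨u, hvu⟩ := H.exists_kAscStep hne hconn hv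
      have hlt : k - klevel H u < n := by have := H.klevel_le u; have := hvu.1; omega
      obtain ⟨t, ht, htop⟩ := ih _ hlt u rfl
      exact ⟨t, H.mem_kAnc_of_kAscStep hvu ht, htop⟩
    · exact ⟨v, H.self_mem_kAnc v, by simpa only [hv] using H.mem_vsetOf_klevel v⟩

/-- in a connected graph with nonempty top vertex set, every vertex
has an ancestor in the top vertex set. -/
theorem exists_top_ancestor [Fintype V] {k : ℕ} (H : KLevelHierarchy V k)
    (hne : (VsetOf H.L k).Nonempty)
    (hconn : ∀ u v : V, wdist (H.w 1) u v < ⊤) :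
    ∀ v : V, (kAnc H v ∩ VsetOf H.L k).Nonempty :=
  exists_top_ancestor_general H hne hconn

end ISLabel
end
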